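/- Let μ ∈ ℂ with μ ≠ 0, and suppose the subgroup Γ_μ of SL(2,ℂ) generated by X and Y_μ is discrete. Let W ∈ SL(2,ℂ) be such that W = X·U·Y_μ·U⁻¹ for some U ∈ Γ_μ, or W = X·U·X⁻¹·U⁻¹ for some U ∈ Γ_μ, and set ν = tr(W) − 2. If ν ≠ 0, then the subgroup Γ_ν of SL(2,ℂ) generated by X and Y_ν is discrete. -/

import Mathlib

open Matrix

noncomputable def X : Matrix.SpecialLinearGroup (Fin 2) ℂ :=
  ⟨!![1, 1; 0, 1], by simp [Matrix.det_fin_two_of]⟩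

noncomputable def Y (μ : ℂ) : Matrix.SpecialLinearGroup (Fin 2) ℂ :=
  ⟨!![1, 0; μ, 1], by simp [Matrix.det_fin_two_of]⟩

noncomputable instance : TopologicalSpace (Matrix.SpecialLinearGroup (Fin 2) ℂ) :=
  TopologicalSpace.induced ((↑) : Matrix.SpecialLinearGroup (Fin 2) ℂ → Matrix (Fin 2) (Fin 2) ℂ)
    inferInstance

/-!
`V = X⁻¹ W` is a conjugate in `Γ_μ` of `Y_μ` or of `X⁻¹`, hence a parabolic element of `Γ_μ`,
and its lower-left entry is `tr (X V) - tr V = ν`. Conjugation by a suitable translation fixes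
`X` and carries `V` to `Y_ν`, so it carries `Γ_ν` onto the subgroup `⟨X, V⟩` of the discrete
group `Γ_μ`.
-/

open scoped MatrixGroups

theorem Subgroup.discreteTopology_of_map_le {G G' : Type*} [Group G] [Group G']
    [TopologicalSpace G] [TopologicalSpace G'] {f : G →* G'} (hf : Continuous f)
    (hinj : Function.Injective f) {H : Subgroup G} {K : Subgroup G'} [DiscreteTopology K]
    (hHK : H.map f ≤ K) : DiscreteTopology H :=
  DiscreteTopology.of_continuous_injective
    (f := fun x : H ↦ (⟨f x, hHK ⟨x, x.2, rfl⟩⟩ : K))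
    (by fun_prop) (fun _ _ hxy ↦ Subtype.ext (hinj (congrArg Subtype.val hxy)))

theorem Subgroup.discreteTopology_of_map_conj_le {G : Type*} [Group G] [TopologicalSpace G]
    [ContinuousMul G] (g : G) {H K : Subgroup G} [DiscreteTopology K]
    (hHK : H.map (MulAut.conj g).toMonoidHom ≤ K) : DiscreteTopology H :=
  discreteTopology_of_map_le (show Continuous fun x ↦ g * x * g⁻¹ by fun_prop)
    (MulEquiv.injective _) hHK

theorem Matrix.SpecialLinearGroup.trace_conj {n R : Type*} [Fintype n] [DecidableEq n]
    [CommRing R] (U P : SpecialLinearGroup n R) :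
    trace ((U * P * U⁻¹ : SpecialLinearGroup n R) : Matrix n n R) =
      trace (P : Matrix n n R) := by
  rw [coe_mul, coe_mul, trace_mul_cycle, ← coe_mul, inv_mul_cancel, coe_one, one_mul]

noncomputable def translation (s : ℂ) : SL(2, ℂ) :=
  ⟨!![1, s; 0, 1], by simp [det_fin_two_of]⟩

theorem coe_translation (s : ℂ) : (translation s : Matrix (Fin 2) (Fin 2) ℂ) = !![1, s; 0, 1] :=
  rfl

theorem coe_X : (X : Matrix (Fin 2) (Fin 2) ℂ) = !![1, 1; 0, 1] := rfl

theorem coe_Y (μ : ℂ) : (Y μ : Matrix (Fin 2) (Fin 2) ℂ) = !![1, 0; μ, 1] := rfl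

theorem trace_Y (μ : ℂ) : trace (Y μ : Matrix (Fin 2) (Fin 2) ℂ) = 2 := by
  norm_num [coe_Y, trace_fin_two]

theorem trace_X_inv : trace ((X⁻¹ : SL(2, ℂ)) : Matrix (Fin 2) (Fin 2) ℂ) = 2 := by
  norm_num [Matrix.SpecialLinearGroup.coe_inv, coe_X, adjugate_fin_two, trace_fin_two]

theorem trace_X_mul (V : SL(2, ℂ)) :
    trace ((X * V : SL(2, ℂ)) : Matrix (Fin 2) (Fin 2) ℂ) =
      trace (V : Matrix (Fin 2) (Fin 2) ℂ) + V 1 0 := by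
  rw [Matrix.SpecialLinearGroup.coe_mul, coe_X, eta_fin_two (V : Matrix (Fin 2) (Fin 2) ℂ),
    mul_fin_two, trace_fin_two, trace_fin_two]
  simp only [of_apply, cons_val', cons_val_zero, cons_val_one, empty_val', cons_val_fin_one]
  ring

theorem translation_mul_X (s : ℂ) : translation s * X = X * translation s := by
  ext : 1
  simp only [Matrix.SpecialLinearGroup.coe_mul, coe_translation, coe_X, mul_fin_two]
  simp [add_comm]

/-- The (0,0) entry forces the translation; trace 2 and determinant 1 make the others match. -/
theorem translation_mul_Y {V : SL(2, ℂ)} (hV : trace (V : Matrix (Fin 2) (Fin 2) ℂ) = 2)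
    (hc : V 1 0 ≠ 0) :
    translation ((V 0 0 - 1) / V 1 0) * Y (V 1 0) = V * translation ((V 0 0 - 1) / V 1 0) := by
  have hdet : V 0 0 * V 1 1 - V 0 1 * V 1 0 = 1 := by rw [← det_fin_two]; exact V.2
  rw [trace_fin_two] at hV
  ext i j
  rw [Matrix.SpecialLinearGroup.coe_mul, Matrix.SpecialLinearGroup.coe_mul, coe_translation,
    coe_Y, eta_fin_two (V : Matrix (Fin 2) (Fin 2) ℂ), mul_fin_two, mul_fin_two]
  fin_cases i <;> fin_cases j <;> simp <;> field_simp
  · ring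
  · linear_combination hdet - V 0 0 * hV
  · linear_combination -hV

/-- The topology on `SL(2, ℂ)` fixed above agrees with Mathlib's subspace topology only up to
unfolding, so instance search does not find Mathlib's instance by itself. -/
instance : IsTopologicalGroup SL(2, ℂ) :=
  Matrix.SpecialLinearGroup.topologicalGroup

theorem farey_image_discrete_general (μ : ℂ)
    (hdisc : DiscreteTopology
      (Subgroup.closure ({X, Y μ} : Set (Matrix.SpecialLinearGroup (Fin 2) ℂ))))
    (W : Matrix.SpecialLinearGroup (Fin 2) ℂ)
    (h : (∃ U ∈ Subgroup.closure ({X, Y μ} : Set (Matrix.SpecialLinearGroup (Fin 2) ℂ)),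
            W = X * U * Y μ * U⁻¹) ∨
         (∃ U ∈ Subgroup.closure ({X, Y μ} : Set (Matrix.SpecialLinearGroup (Fin 2) ℂ)),
            W = X * U * X⁻¹ * U⁻¹))
    (ν : ℂ) (hν : ν = Matrix.trace (W : Matrix (Fin 2) (Fin 2) ℂ) - 2) (hν0 : ν ≠ 0) :
    DiscreteTopology
      (Subgroup.closure ({X, Y ν} : Set (Matrix.SpecialLinearGroup (Fin 2) ℂ))) := by
  set K := Subgroup.closure ({X, Y μ} : Set SL(2, ℂ))
  have hXK : X ∈ K := Subgroup.subset_closure (by simp)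
  obtain ⟨P, hPK, hP, U, hUK, hWU⟩ : ∃ P ∈ K, trace (P : Matrix (Fin 2) (Fin 2) ℂ) = 2 ∧
      ∃ U ∈ K, W = X * (U * P * U⁻¹) := by
    rcases h with ⟨U, hUK, rfl⟩ | ⟨U, hUK, rfl⟩
    · exact ⟨Y μ, Subgroup.subset_closure (by simp), trace_Y μ, U, hUK, by group⟩
    · exact ⟨X⁻¹, inv_mem hXK, trace_X_inv, U, hUK, by group⟩
  set V := U * P * U⁻¹
  have hVK : V ∈ K := mul_mem (mul_mem hUK hPK) (inv_mem hUK)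
  have hV : trace (V : Matrix (Fin 2) (Fin 2) ℂ) = 2 := by
    rw [Matrix.SpecialLinearGroup.trace_conj, hP]
  obtain rfl : ν = V 1 0 := by rw [hν, hWU, trace_X_mul, hV]; ring
  refine Subgroup.discreteTopology_of_map_conj_le (K := K)
    (translation ((V 0 0 - 1) / V 1 0)) ?_
  rw [MonoidHom.map_closure, Set.image_pair, Subgroup.closure_le, Set.pair_subset_iff]
  simp only [MulEquiv.coe_toMonoidHom, MulAut.conj_apply,
    mul_inv_eq_of_eq_mul (translation_mul_X _), mul_inv_eq_of_eq_mul (translation_mul_Y hV hν0)]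
  exact ⟨hXK, hVK⟩

/-- If Γ_μ is discrete, μ ≠ 0, W has one of the two Farey forms with U ∈ Γ_μ, and
ν = tr(W) − 2 ≠ 0, then Γ_ν is discrete. -/
theorem farey_image_discrete (μ : ℂ) (hμ : μ ≠ 0)
    (hdisc : DiscreteTopology
      (Subgroup.closure ({X, Y μ} : Set (Matrix.SpecialLinearGroup (Fin 2) ℂ))))
    (W : Matrix.SpecialLinearGroup (Fin 2) ℂ)
    (h : (∃ U ∈ Subgroup.closure ({X, Y μ} : Set (Matrix.SpecialLinearGroup (Fin 2) ℂ)),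
            W = X * U * Y μ * U⁻¹) ∨
         (∃ U ∈ Subgroup.closure ({X, Y μ} : Set (Matrix.SpecialLinearGroup (Fin 2) ℂ)),
            W = X * U * X⁻¹ * U⁻¹))
    (ν : ℂ) (hν : ν = Matrix.trace (W : Matrix (Fin 2) (Fin 2) ℂ) - 2) (hν0 : ν ≠ 0) :
    DiscreteTopology
      (Subgroup.closure ({X, Y ν} : Set (Matrix.SpecialLinearGroup (Fin 2) ℂ))) :=
  farey_image_discrete_general μ hdisc W h ν hν hν0
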